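/- Let n ≥ 2, let G_1,…,G_n be vertex-disjoint finite simple graphs with chosen vertices u_i ∈ V(G_i), and let G be their vertex-gluing at u_1,…,u_n. Then for every m ≥ 1, m^{n-1} · P_DP(G,m) ≤ ∏_{i=1}^{n} P_DP(G_i,m). -/

import Mathlib

open SimpleGraph Finset

/-- A (standardized) `m`-fold cover of a graph `G`: the vertex set of the cover graph `H`
is `V × Fin m`, where the fiber (list) of a vertex `v` is `L v = {v} × Fin m`.
Every `m`-fold cover in the sense of Dvořák–Postle is isomorphic to one of this form. -/
structure DPCover {V : Type} (G : SimpleGraph V) (m : ℕ) where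
  /-- the cover graph -/
  H : SimpleGraph (V × Fin m)
  /-- each fiber induces a complete graph -/
  fiber_complete : ∀ (v : V) (i j : Fin m), i ≠ j → H.Adj (v, i) (v, j)
  /-- cross-edges only join fibers of adjacent vertices -/
  cross : ∀ (u v : V) (i j : Fin m), H.Adj (u, i) (v, j) → u = v ∨ G.Adj u v
  /-- the cross-edges between the fibers of two adjacent vertices form a matching -/
  matching : ∀ (u v : V), G.Adj u v → ∀ (i j j' : Fin m),
      H.Adj (u, i) (v, j) → H.Adj (u, i) (v, j') → j = j'

/-- `f` encodes an `(L,H)`-coloring of `G`, i.e. the set `{(v, f v) : v ∈ V}` is independent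
in the cover graph. -/
def DPCover.IsColoring {V : Type} {G : SimpleGraph V} {m : ℕ} (C : DPCover G m)
    (f : V → Fin m) : Prop :=
  ∀ u v : V, ¬ C.H.Adj (u, f u) (v, f v)

/-- `P_DP(G, (L,H))`: the number of `(L,H)`-colorings of `G`. -/
noncomputable def DPCover.count {V : Type} [Fintype V] {G : SimpleGraph V} {m : ℕ}
    (C : DPCover G m) : ℕ :=
  Nat.card { f : V → Fin m // C.IsColoring f }

/-- `N((v,j), (L,H))`: the number of `(L,H)`-colorings of `G` containing the vertex `(v, j)`. -/
noncomputable def DPCover.countAt {V : Type} [Fintype V] {G : SimpleGraph V} {m : ℕ}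
    (C : DPCover G m) (v : V) (j : Fin m) : ℕ :=
  Nat.card { f : V → Fin m // C.IsColoring f ∧ f v = j }

/-- The DP color function `P_DP(G, m)`. -/
noncomputable def PDP {V : Type} [Fintype V] (G : SimpleGraph V) (m : ℕ) : ℕ :=
  sInf { n : ℕ | ∃ C : DPCover G m, n = C.count }

/-- The chromatic polynomial `P(G, m)`: the number of proper colorings with colors in `Fin m`. -/
noncomputable def chromPoly {V : Type} [Fintype V] (G : SimpleGraph V) (m : ℕ) : ℕ :=
  Nat.card { f : V → Fin m // ∀ u v : V, G.Adj u v → f u ≠ f v }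

/-- The DP color function threshold `τ_DP(G)`: the least `N ≥ χ(G)` such that
`P_DP(G,m) = P(G,m)` for all `m ≥ N` (and `∞` if there is no such `N`). -/
noncomputable def tauDP {V : Type} [Fintype V] (G : SimpleGraph V) : ℕ∞ :=
  sInf { N : ℕ∞ | ∃ n : ℕ, N = (n : ℕ∞) ∧ G.chromaticNumber ≤ (n : ℕ∞) ∧
      ∀ m : ℕ, n ≤ m → PDP G m = chromPoly G m }

/-- The join `G ∨ K` of two vertex-disjoint graphs. -/
def joinG {α β : Type} (G : SimpleGraph α) (K : SimpleGraph β) : SimpleGraph (α ⊕ β) where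
  Adj x y := match x, y with
    | Sum.inl a, Sum.inl a' => G.Adj a a'
    | Sum.inr b, Sum.inr b' => K.Adj b b'
    | Sum.inl _, Sum.inr _ => True
    | Sum.inr _, Sum.inl _ => True
  symm := by
    constructor
    rintro (a | b) (a' | b') h
    · exact h.symm
    · trivial
    · trivial
    · exact h.symm
  loopless := by
    constructor
    rintro (a | b) h
    · exact G.irrefl h
    · exact K.irrefl h

/-- The vertex-gluing of graphs `G i` at the vertices `u i`: identify all the `u i` into a
single vertex (represented by `none`). -/
def VGlue {n : ℕ} {V : Fin n → Type} (G : ∀ i, SimpleGraph (V i)) (u : ∀ i, V i) :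
    SimpleGraph (Option (Σ i : Fin n, {x : V i // x ≠ u i})) where
  Adj a b := match a, b with
    | none, none => False
    | none, some ⟨i, x⟩ => (G i).Adj (u i) x.val
    | some ⟨i, x⟩, none => (G i).Adj x.val (u i)
    | some ⟨i, x⟩, some ⟨j, y⟩ => ∃ h : i = j, (G j).Adj (cast (congrArg V h) x.val) y.val
  symm := by
    constructor
    rintro (_ | ⟨i, x⟩) (_ | ⟨j, y⟩) h
    · exact h.elim
    · exact h.symm
    · exact h.symm
    · obtain ⟨rfl, h⟩ := h
      exact ⟨rfl, h.symm⟩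
  loopless := by
    constructor
    rintro (_ | ⟨i, x⟩) h
    · exact h
    · obtain ⟨h', h⟩ := h
      exact (G i).irrefl h

/-- The `K_p`-gluing of graphs `G i`, each with a chosen `p`-clique `U i 0, …, U i (p-1)`:
the cliques are identified coordinatewise (the glued clique is `Sum.inl (Fin p)`). -/
def KGlue {n p : ℕ} {V : Fin n → Type} (G : ∀ i, SimpleGraph (V i))
    (U : ∀ i, Fin p → V i) :
    SimpleGraph ((Fin p) ⊕ (Σ i : Fin n, {x : V i // ∀ q, x ≠ U i q})) where
  Adj a b := match a, b with
    | Sum.inl q, Sum.inl q' => q ≠ q'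
    | Sum.inl q, Sum.inr ⟨i, x⟩ => (G i).Adj (U i q) x.val
    | Sum.inr ⟨i, x⟩, Sum.inl q => (G i).Adj x.val (U i q)
    | Sum.inr ⟨i, x⟩, Sum.inr ⟨j, y⟩ => ∃ h : i = j, (G j).Adj (cast (congrArg V h) x.val) y.val
  symm := by
    constructor
    rintro (q | ⟨i, x⟩) (q' | ⟨j, y⟩) h
    · exact h.symm
    · exact h.symm
    · exact h.symm
    · obtain ⟨rfl, h⟩ := h
      exact ⟨rfl, h.symm⟩
  loopless := by
    constructor
    rintro (q | ⟨i, x⟩) h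
    · exact h rfl
    · obtain ⟨h', h⟩ := h
      exact (G i).irrefl h

/-- The disjoint union of a family of graphs. -/
def sigmaG {n : ℕ} {V : Fin n → Type} (G : ∀ i, SimpleGraph (V i)) :
    SimpleGraph (Σ i : Fin n, V i) where
  Adj a b := ∃ h : a.1 = b.1, (G b.1).Adj (cast (congrArg V h) a.2) b.2
  symm := by
    constructor
    rintro ⟨i, x⟩ ⟨j, y⟩ ⟨h1, h2⟩
    dsimp only at h1 h2 ⊢
    subst h1
    exact ⟨rfl, h2.symm⟩
  loopless := by
    constructor
    rintro ⟨i, x⟩ ⟨h1, h2⟩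
    dsimp only at h2
    exact (G i).irrefl h2

/-- chordal: every cycle of length at least `4` has a chord, i.e. an edge of the graph
joining two vertices of the cycle that is not an edge of the cycle. -/
def IsChordal {V : Type} (G : SimpleGraph V) : Prop :=
  ∀ (v : V) (w : G.Walk v v), w.IsCycle → 4 ≤ w.length →
    ∃ x y, x ∈ w.support ∧ y ∈ w.support ∧ G.Adj x y ∧ s(x, y) ∉ w.edges


/-! Take optimal `m`-fold covers `C i` of the graphs `G i` and glue them along the fibres of
the `u i`, after relabelling the fibre of `u i` by a shift `t i ∈ ℤ/m`. A coloring of the glued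
cover is a colour `a` of the glued vertex together with colorings of the `C i` using `a + t i`
at `u i`, so its count is `∑ₐ ∏ᵢ N_i(a + t i)`. Summed over all `mⁿ` shift vectors this is
`m · ∏ᵢ P_DP(G_i, m)`, and each summand is at least `P_DP(G, m)`. -/

section Cover

variable {W : Type} {G : SimpleGraph W} {m : ℕ}

instance DPCover.instNonempty : Nonempty (DPCover G m) :=
  ⟨{ H :=
      { Adj := fun p q => p.1 = q.1 ∧ p.2 ≠ q.2
        symm := ⟨fun _ _ h => ⟨h.1.symm, h.2.symm⟩⟩
        loopless := ⟨fun _ h => h.2 rfl⟩ }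
     fiber_complete := fun _ _ _ h => ⟨rfl, h⟩
     cross := fun _ _ _ _ h => Or.inl h.1
     matching := fun _ _ hadj _ _ _ h _ => absurd h.1 hadj.ne }⟩

variable [Fintype W]

theorem PDP_le_count (C : DPCover G m) : PDP G m ≤ C.count :=
  Nat.sInf_le ⟨C, rfl⟩

theorem exists_count_eq_PDP (G : SimpleGraph W) (m : ℕ) :
    ∃ C : DPCover G m, C.count = PDP G m :=
  let ⟨C⟩ := (inferInstance : Nonempty (DPCover G m))
  let ⟨C', hC'⟩ :=
    Nat.sInf_mem (s := {k | ∃ C : DPCover G m, k = C.count}) ⟨C.count, C, rfl⟩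
  ⟨C', hC'.symm⟩

theorem DPCover.count_eq_sum_countAt (C : DPCover G m) (v : W) :
    C.count = ∑ a : Fin m, C.countAt v a := by
  let e : {f : W → Fin m // C.IsColoring f} ≃
      Σ a : Fin m, {f : W → Fin m // C.IsColoring f ∧ f v = a} :=
    { toFun := fun f => ⟨f.1 v, f.1, f.2, rfl⟩
      invFun := fun p => ⟨p.2.1, p.2.2.1⟩
      left_inv := fun _ => rfl
      right_inv := by rintro ⟨a, f, hf, rfl⟩; rfl }
  rw [DPCover.count, Nat.card_congr e, Nat.card_sigma]
  rfl

end Cover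

theorem Fintype.sum_sum_prod_add_eq_card_mul {ι A R : Type*} [Fintype ι] [DecidableEq ι]
    [AddGroup A] [Fintype A] [CommSemiring R] (f : ι → A → R) :
    ∑ t : ι → A, ∑ a : A, ∏ i, f i (a + t i) = Fintype.card A * ∏ i, ∑ b, f i b := by
  have translate (a : A) : ∑ t : ι → A, ∏ i, f i (a + t i) = ∏ i, ∑ b, f i b :=
    calc ∑ t : ι → A, ∏ i, f i (a + t i)
        = ∑ t : ι → A, ∏ i, f i (t i) :=
          Fintype.sum_equiv (Equiv.piCongrRight fun _ => Equiv.addLeft a) _ _ fun _ => rfl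
      _ = ∏ i, ∑ b, f i b := (Fintype.prod_sum f).symm
  rw [Finset.sum_comm, Fintype.sum_congr _ _ translate, Finset.sum_const, nsmul_eq_mul,
    Finset.card_univ]

section Glue

variable {n : ℕ} {V : Fin n → Type} [∀ i, Fintype (V i)] [∀ i, DecidableEq (V i)]
  (G : ∀ i, SimpleGraph (V i)) (u : ∀ i, V i) {m : ℕ}
  (C : ∀ i, DPCover (G i) m) (t : Fin n → Fin m)

def vglueAdj (p q : Option (Σ i : Fin n, {x : V i // x ≠ u i}) × Fin m) : Prop :=
  match p, q with
  | (none, a), (none, b) => a ≠ b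
  | (none, a), (some ⟨i, x⟩, b) => (C i).H.Adj (u i, a + t i) (x.val, b)
  | (some ⟨i, x⟩, a), (none, b) => (C i).H.Adj (x.val, a) (u i, b + t i)
  | (some ⟨i, x⟩, a), (some ⟨j, y⟩, b) =>
      ∃ h : i = j, (C j).H.Adj (cast (congrArg V h) x.val, a) (y.val, b)

/-- The covers `C i` glued along the fibres of the `u i`, colour `a` of the glued vertex
corresponding to colour `a + t i` of `u i` in `C i`. -/
def DPCover.vglue : DPCover (VGlue G u) m where
  H :=
    { Adj := vglueAdj G u C t
      symm := by
        constructor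
        rintro ⟨_ | ⟨i, x⟩, a⟩ ⟨_ | ⟨j, y⟩, b⟩ h
        · exact Ne.symm h
        · exact h.symm
        · exact h.symm
        · obtain ⟨rfl, h⟩ := h
          exact ⟨rfl, h.symm⟩
      loopless := by
        constructor
        rintro ⟨_ | ⟨i, x⟩, a⟩ h
        · exact h rfl
        · exact (C i).H.irrefl h.2 }
  fiber_complete := by
    rintro (_ | ⟨i, x⟩) a b hab
    · exact hab
    · exact ⟨rfl, (C i).fiber_complete x.val a b hab⟩
  cross := by
    rintro (_ | ⟨i, x⟩) (_ | ⟨j, y⟩) a b h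
    · exact Or.inl rfl
    · exact Or.inr <| ((C j).cross _ _ _ _ h).resolve_left fun he => y.2 he.symm
    · exact Or.inr <| ((C i).cross _ _ _ _ h).resolve_left x.2
    · obtain ⟨rfl, h⟩ := h
      rcases (C i).cross _ _ _ _ h with he | hadj
      · exact Or.inl (by rw [Subtype.ext he])
      · exact Or.inr ⟨rfl, hadj⟩
  matching := by
    rintro (_ | ⟨i, x⟩) (_ | ⟨j, y⟩) hadj a b b' h h'
    · exact hadj.elim
    · exact (C j).matching _ _ hadj _ _ _ h h'
    · exact add_right_cancel ((C i).matching _ _ hadj _ _ _ h h')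
    · obtain ⟨rfl, hadj⟩ := hadj
      exact (C i).matching _ _ hadj _ _ _ h.2 h'.2

def DPCover.vglueColoringEquiv (a : Fin m) :
    {f : Option (Σ i : Fin n, {x : V i // x ≠ u i}) → Fin m //
        (DPCover.vglue G u C t).IsColoring f ∧ f none = a} ≃
      ∀ i, {g : V i → Fin m // (C i).IsColoring g ∧ g (u i) = a + t i} where
  toFun F i :=
    ⟨fun x => if hx : x = u i then a + t i else F.1 (some ⟨i, x, hx⟩), by
      obtain ⟨f, hf, rfl⟩ := F
      intro x y
      dsimp only
      split_ifs with hx hy hy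
      · subst hx hy
        exact (C i).H.irrefl
      · subst hx
        exact hf none (some ⟨i, y, hy⟩)
      · subst hy
        exact hf (some ⟨i, x, hx⟩) none
      · exact fun h => hf (some ⟨i, x, hx⟩) (some ⟨i, y, hy⟩) ⟨rfl, h⟩, dif_pos rfl⟩
  invFun F :=
    ⟨fun w => Option.rec a (fun p => (F p.1).1 p.2.val) w, by
      rintro (_ | ⟨i, x⟩) (_ | ⟨j, y⟩) h
      · exact h rfl
      · exact (F j).2.1 (u j) y.val (by rw [(F j).2.2]; exact h)
      · exact (F i).2.1 x.val (u i) (by rw [(F i).2.2]; exact h)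
      · obtain ⟨rfl, h⟩ := h
        exact (F i).2.1 x.val y.val h, rfl⟩
  left_inv := by
    rintro ⟨f, -, rfl⟩
    ext (_ | ⟨i, x⟩)
    · rfl
    · exact congrArg Fin.val (dif_neg x.2)
  right_inv F := by
    funext i
    ext x
    by_cases hx : x = u i
    · subst hx
      exact congrArg Fin.val ((dif_pos rfl).trans (F i).2.2.symm)
    · exact congrArg Fin.val (dif_neg hx)

theorem DPCover.count_vglue :
    (DPCover.vglue G u C t).count = ∑ a : Fin m, ∏ i, (C i).countAt (u i) (a + t i) := by
  rw [count_eq_sum_countAt _ none]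
  refine Fintype.sum_congr _ _ fun a => ?_
  rw [DPCover.countAt, Nat.card_congr (vglueColoringEquiv G u C t a), Nat.card_pi]
  rfl

end Glue

theorem stmt_3 {n : ℕ} (hn : 2 ≤ n) {V : Fin n → Type}
    [∀ i, Fintype (V i)] [∀ i, DecidableEq (V i)]
    (G : ∀ i, SimpleGraph (V i)) (u : ∀ i, V i) (m : ℕ) (hm : 1 ≤ m) :
    m ^ (n - 1) * PDP (VGlue G u) m ≤ ∏ i : Fin n, PDP (G i) m := by
  have : NeZero m := ⟨by omega⟩
  choose C hC using fun i => exists_count_eq_PDP (G i) m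
  have averaged : m ^ n * PDP (VGlue G u) m ≤ m * ∏ i, PDP (G i) m :=
    calc m ^ n * PDP (VGlue G u) m
        = ∑ _t : Fin n → Fin m, PDP (VGlue G u) m := by simp
      _ ≤ ∑ t : Fin n → Fin m, (DPCover.vglue G u C t).count :=
          Finset.sum_le_sum fun t _ => PDP_le_count _
      _ = m * ∏ i, PDP (G i) m := by
          simp_rw [DPCover.count_vglue, ← hC, DPCover.count_eq_sum_countAt _ (u _)]
          simpa using Fintype.sum_sum_prod_add_eq_card_mul fun i => (C i).countAt (u i)
  have hpow : m ^ n = m * m ^ (n - 1) := by rw [← pow_succ']; congr 1; omega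
  rw [hpow, mul_assoc] at averaged
  exact Nat.le_of_mul_le_mul_left averaged (by omega)
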